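/- Let ε > 0 and let (f, g) be a pair of ε-potentials such that sup_{x ∈ Ω₀} |S_x| ≤ (b₁ − a₁)/3. For every x ∈ Ω₀ with ξ(x, a₁) < 0 (equivalently y_m(x) > a₁), the function y_m is differentiable at x with y_m'(x) = (f'(x) − y_m(x))/(x − g'(y_m(x))), and y_m'(x) > 0 because y_m(x) < f'(x) and g'(y_m(x)) < x. Symmetrically, for every x ∈ Ω₀ with ξ(x, b₁) < 0 (equivalently y_M(x) < b₁), the function y_M is differentiable at x with y_M'(x) = (f'(x) − y_M(x))/(x − g'(y_M(x))) > 0. -/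

import Mathlib

open MeasureTheory Set
open scoped Classical ENNReal

noncomputable section

/-- `μ` is a probability measure supported on `[a,b]` with continuous density `u`
bounded below by `lam` and above by `Lam` on `[a,b]`. -/
def IsGoodMarginal (μ : Measure ℝ) (u : ℝ → ℝ) (a b lam Lam : ℝ) : Prop :=
  IsProbabilityMeasure μ ∧
  μ = (volume.restrict (Icc a b)).withDensity (fun x => ENNReal.ofReal (u x)) ∧
  ContinuousOn u (Icc a b) ∧
  ∀ x ∈ Icc a b, lam ≤ u x ∧ u x ≤ Lam

/-- `(f,g)` is a pair of `ε`-potentials for the quadratically regularized OT problem. -/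
def IsPotentialPair (μ₀ μ₁ : Measure ℝ) (a₀ b₀ a₁ b₁ ε : ℝ) (f g : ℝ → ℝ) : Prop :=
  (∃ K, LipschitzOnWith K f (Icc a₀ b₀)) ∧
  (∃ K, LipschitzOnWith K g (Icc a₁ b₁)) ∧
  (∀ x ∈ Icc a₀ b₀, ∫ y in Icc a₁ b₁, max (x * y - f x - g y) 0 ∂μ₁ = ε) ∧
  (∀ y ∈ Icc a₁ b₁, ∫ x in Icc a₀ b₀, max (x * y - f x - g y) 0 ∂μ₀ = ε)

/-- the `x`-section `S_x` of the support of the optimal coupling. -/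
def secX (f g : ℝ → ℝ) (a₁ b₁ x : ℝ) : Set ℝ :=
  {y ∈ Icc a₁ b₁ | 0 ≤ x * y - f x - g y}

/-- the `y`-section `S^y` of the support of the optimal coupling. -/
def secY (f g : ℝ → ℝ) (a₀ b₀ y : ℝ) : Set ℝ :=
  {x ∈ Icc a₀ b₀ | 0 ≤ x * y - f x - g y}

/-- `T_ε(x) = (∫_{S_x} y dμ₁)/μ₁(S_x)`, the derivative `f'` of the potential `f`. -/
def Tmap (μ₁ : Measure ℝ) (f g : ℝ → ℝ) (a₁ b₁ x : ℝ) : ℝ :=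
  (∫ y in secX f g a₁ b₁ x, y ∂μ₁) / (μ₁ (secX f g a₁ b₁ x)).toReal

/-- the symmetric quantity, the derivative `g'` of the potential `g`. -/
def Gmap (μ₀ : Measure ℝ) (f g : ℝ → ℝ) (a₀ b₀ y : ℝ) : ℝ :=
  (∫ x in secY f g a₀ b₀ y, x ∂μ₀) / (μ₀ (secY f g a₀ b₀ y)).toReal

/-- left endpoint `y_m(x)` of `S_x`. -/
def ymF (f g : ℝ → ℝ) (a₁ b₁ x : ℝ) : ℝ := sInf (secX f g a₁ b₁ x)

/-- right endpoint `y_M(x)` of `S_x`. -/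
def yMF (f g : ℝ → ℝ) (a₁ b₁ x : ℝ) : ℝ := sSup (secX f g a₁ b₁ x)

/-- left endpoint `x_m(y)` of `S^y`. -/
def xmF (f g : ℝ → ℝ) (a₀ b₀ y : ℝ) : ℝ := sInf (secY f g a₀ b₀ y)

/-- right endpoint `x_M(y)` of `S^y`. -/
def xMF (f g : ℝ → ℝ) (a₀ b₀ y : ℝ) : ℝ := sSup (secY f g a₀ b₀ y)

/-- `T₀` is the (nondecreasing) Monge map from `μ₀` to `μ₁`. -/
def IsMongeMap (μ₀ μ₁ : Measure ℝ) (T₀ : ℝ → ℝ) : Prop :=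
  Monotone T₀ ∧ Measure.map T₀ μ₀ = μ₁

/-- convex conjugate relative to `[a,b]`. -/
def conjOn (f : ℝ → ℝ) (a b y : ℝ) : ℝ := sSup ((fun x => x * y - f x) '' Icc a b)

/-!
Comparing `∫ ξ(x, ·)₊ dμ₁ = ε = ∫ ξ(x', ·)₊ dμ₁` on `S_x` gives the subgradient inequality
`T(x) (x' - x) ≤ f x' - f x`, where `T(x)` is the `μ₁`-mean of `S_x`; symmetrically for `g`.
Hence `f`, `g` are convex, `ξ(x, ·)` is concave, and `S_x = [y_m(x), y_M(x)]` with `ξ(x, ·) > 0`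
inside. A compactness argument makes `y_m`, `y_M`, and so `T`, continuous, and a convex function
with a continuous subgradient is differentiable: `f' = T`, `g' = G`. At an endpoint `y_m(x) > a₁`
we have `ξ(x, y_m(x)) = 0`, and implicit differentiation gives `y_m'`. For the signs:
`y_m(x) < T(x)` because `μ₁` has no atoms, and by the subgradient inequality every `x' ∈ S^{y_m(x)}` satisfies
`x' ≤ x`, so `G(y_m(x)) < x`.
-/

open Filter Topology

lemma IsGoodMarginal.nullSingletonClass {μ : Measure ℝ} {u : ℝ → ℝ} {a b lam Lam : ℝ}
    (h : IsGoodMarginal μ u a b lam Lam) : NullSingletonClass μ := by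
  rw [h.2.1]
  infer_instance

section Mean

variable {μ : Measure ℝ} [IsFiniteMeasure μ] [NullSingletonClass μ] {S : Set ℝ} {c : ℝ}

lemma setIntegral_pos_of_nonneg_of_eq_zero_imp_eq {φ : ℝ → ℝ} (hφ : Continuous φ)
    (hS : IsCompact S) (hμS : μ S ≠ 0) (hnonneg : ∀ y ∈ S, 0 ≤ φ y)
    (hzero : ∀ y ∈ S, φ y = 0 → y = c) : 0 < ∫ y in S, φ y ∂μ := by
  rw [setIntegral_pos_iff_support_of_nonneg_ae (ae_restrict_of_forall_mem hS.measurableSet hnonneg)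
    (hφ.continuousOn.integrableOn_compact hS)]
  refine (pos_iff_ne_zero.2 hμS).trans_le ?_
  rw [← measure_sdiff_null (s := S) (measure_singleton c)]
  exact measure_mono fun y ⟨hyS, hyc⟩ => ⟨fun h => hyc (hzero y hyS h), hyS⟩

lemma lt_setIntegral_id_div (hS : IsCompact S) (hμS : μ S ≠ 0) (hc : ∀ y ∈ S, c ≤ y) :
    c < (∫ y in S, y ∂μ) / (μ S).toReal := by
  have hpos : 0 < ∫ y in S, (y - c) ∂μ :=
    setIntegral_pos_of_nonneg_of_eq_zero_imp_eq (by fun_prop) hS hμS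
      (fun y hy => sub_nonneg.2 (hc y hy)) (fun y _ h => sub_eq_zero.1 h)
  rw [integral_sub ((continuousOn_id' S).integrableOn_compact hS) integrableOn_const,
    setIntegral_const, smul_eq_mul, measureReal_def, sub_pos] at hpos
  rwa [lt_div_iff₀ (ENNReal.toReal_pos hμS (measure_ne_top μ S)), mul_comm]

lemma setIntegral_id_div_lt (hS : IsCompact S) (hμS : μ S ≠ 0) (hc : ∀ y ∈ S, y ≤ c) :
    (∫ y in S, y ∂μ) / (μ S).toReal < c := by
  have hpos : 0 < ∫ y in S, (c - y) ∂μ :=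
    setIntegral_pos_of_nonneg_of_eq_zero_imp_eq (by fun_prop) hS hμS
      (fun y hy => sub_nonneg.2 (hc y hy)) (fun y _ h => (sub_eq_zero.1 h).symm)
  rw [integral_sub (integrableOn_const (C := c)) ((continuousOn_id' S).integrableOn_compact hS),
    setIntegral_const, smul_eq_mul, measureReal_def, sub_pos] at hpos
  rwa [div_lt_iff₀ (ENNReal.toReal_pos hμS (measure_ne_top μ S)), mul_comm]

end Mean

lemma convexOn_of_subgradient {s : Set ℝ} (hs : Convex ℝ s) {φ g : ℝ → ℝ}
    (h : ∀ y ∈ s, ∀ y' ∈ s, φ y * (y' - y) ≤ g y' - g y) : ConvexOn ℝ s g := by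
  refine ⟨hs, fun p hp q hq a b ha hb hab => ?_⟩
  have hz := hs hp hq ha hb hab
  have hp' := mul_le_mul_of_nonneg_left (h _ hz p hp) ha
  have hq' := mul_le_mul_of_nonneg_left (h _ hz q hq) hb
  simp only [smul_eq_mul] at hp' hq' ⊢
  rw [← sub_nonneg]
  have hb' : b = 1 - a := by linarith
  subst hb'
  nlinarith

lemma ConcaveOn.pos_of_mem_openSegment {s : Set ℝ} {h : ℝ → ℝ} (hh : ConcaveOn ℝ s h)
    {p q y : ℝ} (hp : p ∈ s) (hq : q ∈ s) (hy : y ∈ openSegment ℝ p q) (hp0 : 0 ≤ h p)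
    (hq0 : 0 < h q) : 0 < h y := by
  obtain ⟨a, b, ha, hb, hab, rfl⟩ := hy
  calc 0 < a • h p + b • h q := by
        simp only [smul_eq_mul]; nlinarith [mul_nonneg ha.le hp0, mul_pos hb hq0]
    _ ≤ h (a • p + b • q) := hh.2 hp hq ha.le hb.le hab

section Endpoints

variable {f g : ℝ → ℝ} {a₁ b₁ x y : ℝ}

lemma continuousOn_xi (hg : ContinuousOn g (Icc a₁ b₁)) :
    ContinuousOn (fun y => x * y - f x - g y) (Icc a₁ b₁) := by
  fun_prop

lemma secX_subset_Icc : secX f g a₁ b₁ x ⊆ Icc a₁ b₁ := fun _ hy => hy.1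

lemma isCompact_secX (hg : ContinuousOn g (Icc a₁ b₁)) : IsCompact (secX f g a₁ b₁ x) :=
  isCompact_Icc.of_isClosed_subset
    ((continuousOn_xi hg).preimage_isClosed_of_isClosed isClosed_Icc isClosed_Ici)
    secX_subset_Icc

lemma ymF_le (hy : y ∈ secX f g a₁ b₁ x) : ymF f g a₁ b₁ x ≤ y :=
  csInf_le (bddBelow_Icc.mono secX_subset_Icc) hy

lemma le_yMF (hy : y ∈ secX f g a₁ b₁ x) : y ≤ yMF f g a₁ b₁ x :=
  le_csSup (bddAbove_Icc.mono secX_subset_Icc) hy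

lemma secX_subset_Icc_ymF_yMF : secX f g a₁ b₁ x ⊆ Icc (ymF f g a₁ b₁ x) (yMF f g a₁ b₁ x) :=
  fun _ hy => ⟨ymF_le hy, le_yMF hy⟩

lemma xi_neg_of_lt_ymF (hy : y ∈ Icc a₁ b₁) (h : y < ymF f g a₁ b₁ x) :
    x * y - f x - g y < 0 :=
  not_le.1 fun h' => (ymF_le ⟨hy, h'⟩).not_gt h

lemma xi_neg_of_yMF_lt (hy : y ∈ Icc a₁ b₁) (h : yMF f g a₁ b₁ x < y) :
    x * y - f x - g y < 0 :=
  not_le.1 fun h' => (le_yMF ⟨hy, h'⟩).not_gt h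

variable (hg : ContinuousOn g (Icc a₁ b₁)) (hne : (secX f g a₁ b₁ x).Nonempty)
include hg hne

lemma ymF_mem : ymF f g a₁ b₁ x ∈ secX f g a₁ b₁ x := (isCompact_secX hg).sInf_mem hne

lemma yMF_mem : yMF f g a₁ b₁ x ∈ secX f g a₁ b₁ x := (isCompact_secX hg).sSup_mem hne

lemma xi_neg_iff_lt_ymF : x * a₁ - f x - g a₁ < 0 ↔ a₁ < ymF f g a₁ b₁ x := by
  have hm := ymF_mem hg hne
  refine ⟨fun h => hm.1.1.lt_of_ne fun heq => hm.2.not_gt (heq ▸ h), fun h => ?_⟩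
  exact xi_neg_of_lt_ymF ⟨le_rfl, hm.1.1.trans hm.1.2⟩ h

lemma xi_neg_iff_yMF_lt : x * b₁ - f x - g b₁ < 0 ↔ yMF f g a₁ b₁ x < b₁ := by
  have hm := yMF_mem hg hne
  refine ⟨fun h => hm.1.2.lt_of_ne fun heq => hm.2.not_gt (by rwa [heq]), fun h => ?_⟩
  exact xi_neg_of_yMF_lt ⟨hm.1.1.trans hm.1.2, le_rfl⟩ h

omit hne in
lemma xi_eq_zero_of_mem_closure {s : Set ℝ} (hy : y ∈ secX f g a₁ b₁ x) (hs : s ⊆ Icc a₁ b₁)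
    (hneg : ∀ z ∈ s, x * z - f x - g z < 0) (hcl : y ∈ closure s) :
    x * y - f x - g y = 0 := by
  refine le_antisymm ?_ hy.2
  have := ((continuousOn_xi (f := f) (x := x) hg y hy.1).mono hs).mem_closure_image hcl
  exact closure_minimal (image_subset_iff.2 fun z hz => mem_preimage.2 (mem_Iic.2 (hneg z hz).le))
    isClosed_Iic this

lemma xi_ymF_eq_zero (h : a₁ < ymF f g a₁ b₁ x) :
    x * ymF f g a₁ b₁ x - f x - g (ymF f g a₁ b₁ x) = 0 := by
  have hm := ymF_mem hg hne
  refine xi_eq_zero_of_mem_closure hg hm (s := Ioo a₁ _)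
    (fun z hz => ⟨hz.1.le, hz.2.le.trans hm.1.2⟩) (fun z hz => xi_neg_of_lt_ymF ⟨hz.1.le, hz.2.le.trans hm.1.2⟩ hz.2) ?_
  rw [closure_Ioo h.ne]
  exact right_mem_Icc.2 h.le

lemma xi_yMF_eq_zero (h : yMF f g a₁ b₁ x < b₁) :
    x * yMF f g a₁ b₁ x - f x - g (yMF f g a₁ b₁ x) = 0 := by
  have hm := yMF_mem hg hne
  refine xi_eq_zero_of_mem_closure hg hm (s := Ioo _ b₁)
    (fun z hz => ⟨hm.1.1.trans hz.1.le, hz.2.le⟩) (fun z hz => xi_neg_of_yMF_lt ⟨hm.1.1.trans hz.1.le, hz.2.le⟩ hz.1) ?_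
  rw [closure_Ioo h.ne]
  exact left_mem_Icc.2 h.le

end Endpoints

section Measure

variable {μ : Measure ℝ} {f g : ℝ → ℝ} {a₁ b₁ x x' : ℝ}

lemma measure_secX_ne_zero (h : ∫ y in Icc a₁ b₁, max (x * y - f x - g y) 0 ∂μ ≠ 0) :
    μ (secX f g a₁ b₁ x) ≠ 0 := by
  intro h0
  refine h ?_
  rw [← setIntegral_congr_set (sdiff_null_ae_eq_self h0)]
  exact setIntegral_eq_zero_of_forall_eq_zero fun y hy =>
    max_eq_right (not_le.1 fun h' => hy.2 ⟨hy.1, h'⟩).le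

lemma exists_xi_pos (h : ∫ y in Icc a₁ b₁, max (x * y - f x - g y) 0 ∂μ ≠ 0) :
    ∃ y ∈ Icc a₁ b₁, 0 < x * y - f x - g y := by
  by_contra! hle
  exact h (setIntegral_eq_zero_of_forall_eq_zero fun y hy => max_eq_right (hle y hy))

/-- Moving from `x` to `x'` changes `ξ` on `S_x` by the affine function
`y ↦ (x' - x) y - (f x' - f x)`; since both `∫ ξ₊` agree, its `μ`-integral over `S_x` is `≤ 0`. -/
lemma Tmap_mul_sub_le [IsFiniteMeasure μ] (hg : ContinuousOn g (Icc a₁ b₁))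
    (hS : μ (secX f g a₁ b₁ x) ≠ 0)
    (hE : ∫ y in Icc a₁ b₁, max (x * y - f x - g y) 0 ∂μ =
      ∫ y in Icc a₁ b₁, max (x' * y - f x' - g y) 0 ∂μ) :
    Tmap μ f g a₁ b₁ x * (x' - x) ≤ f x' - f x := by
  set S := secX f g a₁ b₁ x
  have hSc : IsCompact S := isCompact_secX hg
  have hint : ∀ z, IntegrableOn (fun y => max (z * y - f z - g y) 0) (Icc a₁ b₁) μ := fun z =>
    ((continuousOn_xi hg).sup continuousOn_const).integrableOn_compact isCompact_Icc
  set φ : ℝ → ℝ := fun y => (x' - x) * y - (f x' - f x)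
  have hφ : Continuous φ := by fun_prop
  have hind : IntegrableOn (S.indicator φ) (Icc a₁ b₁) μ :=
    (hφ.continuousOn.integrableOn_compact isCompact_Icc).indicator hSc.measurableSet
  have hmono : ∫ y in Icc a₁ b₁, (max (x * y - f x - g y) 0 + S.indicator φ y) ∂μ ≤
      ∫ y in Icc a₁ b₁, max (x' * y - f x' - g y) 0 ∂μ := by
    refine setIntegral_mono_on ((hint x).add hind) (hint x') measurableSet_Icc fun y hy => ?_
    by_cases hyS : y ∈ S
    · rw [indicator_of_mem hyS, max_eq_left hyS.2]
      calc _ = x' * y - f x' - g y := by ring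
        _ ≤ _ := le_max_left _ _
    · rw [indicator_of_notMem hyS, add_zero, max_eq_right (not_le.1 fun h => hyS ⟨hy, h⟩).le]
      exact le_max_right _ _
  rw [integral_add (hint x) hind, hE, setIntegral_indicator hSc.measurableSet,
    inter_eq_self_of_subset_right secX_subset_Icc, add_le_iff_nonpos_right] at hmono
  have hφS : ∫ y in S, φ y ∂μ = (x' - x) * ∫ y in S, y ∂μ - (μ S).toReal * (f x' - f x) := by
    rw [integral_sub (((continuousOn_id' S).integrableOn_compact hSc).const_mul _)
      integrableOn_const, integral_const_mul, setIntegral_const, smul_eq_mul, measureReal_def]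
  rw [Tmap, div_mul_eq_mul_div, div_le_iff₀ (ENNReal.toReal_pos hS (measure_ne_top μ S))]
  linarith

end Measure

section Concave

variable {μ : Measure ℝ} {f g : ℝ → ℝ} {a₁ b₁ x y : ℝ}

lemma concaveOn_xi (hgc : ConvexOn ℝ (Icc a₁ b₁) g) :
    ConcaveOn ℝ (Icc a₁ b₁) (fun y => x * y - f x - g y) :=
  (((LinearMap.mulLeft ℝ x).concaveOn (convex_Icc a₁ b₁)).sub
    (convexOn_const (f x) (convex_Icc a₁ b₁))).sub hgc

lemma secX_eq_Icc (hg : ContinuousOn g (Icc a₁ b₁)) (hgc : ConvexOn ℝ (Icc a₁ b₁) g)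
    (hne : (secX f g a₁ b₁ x).Nonempty) :
    secX f g a₁ b₁ x = Icc (ymF f g a₁ b₁ x) (yMF f g a₁ b₁ x) :=
  secX_subset_Icc_ymF_yMF.antisymm <|
    ((concaveOn_xi hgc).convex_ge 0).ordConnected.out (ymF_mem hg hne) (yMF_mem hg hne)

lemma xi_pos_of_mem_Ioo (hg : ContinuousOn g (Icc a₁ b₁)) (hgc : ConvexOn ℝ (Icc a₁ b₁) g)
    (hI : ∫ y in Icc a₁ b₁, max (x * y - f x - g y) 0 ∂μ ≠ 0)
    (hy : y ∈ Ioo (ymF f g a₁ b₁ x) (yMF f g a₁ b₁ x)) : 0 < x * y - f x - g y := by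
  obtain ⟨y₀, hy₀, hpos⟩ := exists_xi_pos hI
  have hne : (secX f g a₁ b₁ x).Nonempty := ⟨y₀, hy₀, hpos.le⟩
  have hm := ymF_mem hg hne
  have hM := yMF_mem hg hne
  rcases lt_trichotomy y y₀ with hlt | rfl | hgt
  · refine (concaveOn_xi hgc).pos_of_mem_openSegment hm.1 hy₀ ?_ hm.2 hpos
    rw [openSegment_eq_Ioo (hy.1.trans hlt)]
    exact ⟨hy.1, hlt⟩
  · exact hpos
  · refine (concaveOn_xi hgc).pos_of_mem_openSegment hM.1 hy₀ ?_ hM.2 hpos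
    rw [openSegment_symm, openSegment_eq_Ioo (hgt.trans hy.2)]
    exact ⟨hgt, hy.2⟩

lemma ymF_lt_yMF [NullSingletonClass μ] (hS : μ (secX f g a₁ b₁ x) ≠ 0) :
    ymF f g a₁ b₁ x < yMF f g a₁ b₁ x :=
  lt_of_not_ge fun h => hS <| measure_mono_null
    (fun _ hz => mem_singleton_iff.2 (le_antisymm ((le_yMF hz).trans h) (ymF_le hz)))
    (measure_singleton _)

lemma Tmap_mem_Ioo [IsFiniteMeasure μ] [NullSingletonClass μ] (hg : ContinuousOn g (Icc a₁ b₁))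
    (hS : μ (secX f g a₁ b₁ x) ≠ 0) :
    Tmap μ f g a₁ b₁ x ∈ Ioo (ymF f g a₁ b₁ x) (yMF f g a₁ b₁ x) :=
  ⟨lt_setIntegral_id_div (isCompact_secX hg) hS fun _ => ymF_le,
    setIntegral_id_div_lt (isCompact_secX hg) hS fun _ => le_yMF⟩

end Concave

section Continuity

variable {μ : Measure ℝ} {f g : ℝ → ℝ} {s : Set ℝ} {a₀ b₀ a₁ b₁ x₀ y : ℝ}

lemma eventually_mem_secX (hf : ContinuousWithinAt f s x₀) (hy : y ∈ Icc a₁ b₁)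
    (hpos : 0 < x₀ * y - f x₀ - g y) : ∀ᶠ x in 𝓝[s] x₀, y ∈ secX f g a₁ b₁ x := by
  have : ContinuousWithinAt (fun x => x * y - f x - g y) s x₀ := by fun_prop
  filter_upwards [this.eventually (lt_mem_nhds hpos)] with x hx using ⟨hy, hx.le⟩

/-- On a compact `K`, `ξ(x₀, ·) ≤ m < 0`; since `|ξ(x, y) - ξ(x₀, y)| ≤ |x - x₀| C + |f x - f x₀|`
uniformly for `|y| ≤ C`, the bound `ξ(x, ·) < 0` persists near `x₀`. -/
lemma eventually_forall_xi_neg (hf : ContinuousWithinAt f s x₀) (hg : ContinuousOn g (Icc a₁ b₁))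
    {K : Set ℝ} (hK : IsCompact K) (hKI : K ⊆ Icc a₁ b₁)
    (hneg : ∀ y ∈ K, x₀ * y - f x₀ - g y < 0) :
    ∀ᶠ x in 𝓝[s] x₀, ∀ y ∈ K, x * y - f x - g y < 0 := by
  rcases K.eq_empty_or_nonempty with rfl | hKne
  · simp
  obtain ⟨y₁, hy₁, hmax⟩ :=
    hK.exists_isMaxOn hKne ((continuousOn_xi (f := f) (x := x₀) hg).mono hKI)
  obtain ⟨C, hC⟩ := hK.isBounded.exists_norm_le
  have hcont : ContinuousWithinAt (fun x => |x - x₀| * C + |f x - f x₀|) s x₀ := by fun_prop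
  have hsmall : ∀ᶠ x in 𝓝[s] x₀, |x - x₀| * C + |f x - f x₀| < -(x₀ * y₁ - f x₀ - g y₁) :=
    hcont.eventually (gt_mem_nhds (by simpa using hneg y₁ hy₁))
  filter_upwards [hsmall] with x hx y hy
  have h1 : x₀ * y - f x₀ - g y ≤ x₀ * y₁ - f x₀ - g y₁ := hmax hy
  have h2 : (x - x₀) * y ≤ |x - x₀| * C := (le_abs_self _).trans
    (by rw [abs_mul]; exact mul_le_mul_of_nonneg_left (hC y hy) (abs_nonneg _))
  have h3 : f x₀ - f x ≤ |f x - f x₀| := by rw [abs_sub_comm]; exact le_abs_self _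
  have : x * y - f x - g y = (x₀ * y - f x₀ - g y) + (x - x₀) * y + (f x₀ - f x) := by ring
  linarith

variable [NullSingletonClass μ] (hf : ContinuousOn f (Icc a₀ b₀)) (hg : ContinuousOn g (Icc a₁ b₁))
  (hgc : ConvexOn ℝ (Icc a₁ b₁) g)
  (hI : ∀ x ∈ Icc a₀ b₀, ∫ y in Icc a₁ b₁, max (x * y - f x - g y) 0 ∂μ ≠ 0)
include hf hg hgc hI

lemma continuousWithinAt_ymF (hx₀ : x₀ ∈ Icc a₀ b₀) :
    ContinuousWithinAt (ymF f g a₁ b₁) (Icc a₀ b₀) x₀ := by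
  have hne : ∀ x ∈ Icc a₀ b₀, (secX f g a₁ b₁ x).Nonempty := fun x hx =>
    nonempty_of_measure_ne_zero (measure_secX_ne_zero (hI x hx))
  have hm := ymF_mem hg (hne x₀ hx₀)
  refine tendsto_order.2 ⟨fun a ha => ?_, fun b hb => ?_⟩
  · have hK : Icc a₁ a ⊆ Icc a₁ b₁ := Icc_subset_Icc_right (ha.le.trans hm.1.2)
    filter_upwards [eventually_forall_xi_neg (hf x₀ hx₀) hg isCompact_Icc hK
      (fun y hy => xi_neg_of_lt_ymF (hK hy) (hy.2.trans_lt ha)), self_mem_nhdsWithin]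
      with x hx hxI
    have hmx := ymF_mem hg (hne x hxI)
    exact lt_of_not_ge fun h => (hx _ ⟨hmx.1.1, h⟩).not_ge hmx.2
  · obtain ⟨y, hy⟩ := nonempty_Ioo.2 (lt_min (ymF_lt_yMF (measure_secX_ne_zero (hI x₀ hx₀))) hb)
    have hyIoo : y ∈ Ioo (ymF f g a₁ b₁ x₀) (yMF f g a₁ b₁ x₀) :=
      ⟨hy.1, hy.2.trans_le (min_le_left _ _)⟩
    filter_upwards [eventually_mem_secX (hf x₀ hx₀)
      ⟨hm.1.1.trans hy.1.le, hyIoo.2.le.trans (yMF_mem hg (hne x₀ hx₀)).1.2⟩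
      (xi_pos_of_mem_Ioo hg hgc (hI x₀ hx₀) hyIoo)] with x hx
    exact (ymF_le hx).trans_lt (hy.2.trans_le (min_le_right _ _))

lemma continuousWithinAt_yMF (hx₀ : x₀ ∈ Icc a₀ b₀) :
    ContinuousWithinAt (yMF f g a₁ b₁) (Icc a₀ b₀) x₀ := by
  have hne : ∀ x ∈ Icc a₀ b₀, (secX f g a₁ b₁ x).Nonempty := fun x hx =>
    nonempty_of_measure_ne_zero (measure_secX_ne_zero (hI x hx))
  have hM := yMF_mem hg (hne x₀ hx₀)
  refine tendsto_order.2 ⟨fun a ha => ?_, fun b hb => ?_⟩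
  · obtain ⟨y, hy⟩ := nonempty_Ioo.2 (max_lt ha (ymF_lt_yMF (measure_secX_ne_zero (hI x₀ hx₀))))
    have hyIoo : y ∈ Ioo (ymF f g a₁ b₁ x₀) (yMF f g a₁ b₁ x₀) :=
      ⟨(le_max_right _ _).trans_lt hy.1, hy.2⟩
    filter_upwards [eventually_mem_secX (hf x₀ hx₀)
      ⟨(ymF_mem hg (hne x₀ hx₀)).1.1.trans hyIoo.1.le, hy.2.le.trans hM.1.2⟩
      (xi_pos_of_mem_Ioo hg hgc (hI x₀ hx₀) hyIoo)] with x hx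
    exact ((le_max_left _ _).trans_lt hy.1).trans_le (le_yMF hx)
  · have hK : Icc b b₁ ⊆ Icc a₁ b₁ := Icc_subset_Icc_left (hM.1.1.trans hb.le)
    filter_upwards [eventually_forall_xi_neg (hf x₀ hx₀) hg isCompact_Icc hK
      (fun y hy => xi_neg_of_yMF_lt (hK hy) (hb.trans_le hy.1)), self_mem_nhdsWithin]
      with x hx hxI
    have hMx := yMF_mem hg (hne x hxI)
    exact lt_of_not_ge fun h => (hx _ ⟨h, hMx.1.2⟩).not_ge hMx.2

end Continuity

lemma tendsto_setIntegral_Icc {α : Type*} {l : Filter α} {μ : Measure ℝ} [IsFiniteMeasure μ]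
    [NullSingletonClass μ] {φ : ℝ → ℝ} (hφ : Continuous φ) {c d : α → ℝ} {c₀ d₀ : ℝ}
    (hc : Tendsto c l (𝓝 c₀)) (hd : Tendsto d l (𝓝 d₀)) (hcd : ∀ᶠ x in l, c x ≤ d x)
    (hcd₀ : c₀ ≤ d₀) :
    Tendsto (fun x => ∫ y in Icc (c x) (d x), φ y ∂μ) l (𝓝 (∫ y in Icc c₀ d₀, φ y ∂μ)) := by
  have hsub : ∀ p q, p ≤ q →
      ∫ y in Icc p q, φ y ∂μ = (∫ y in (0 : ℝ)..q, φ y ∂μ) - ∫ y in (0 : ℝ)..p, φ y ∂μ :=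
    fun p q hpq => by
      rw [integral_Icc_eq_integral_Ioc, ← intervalIntegral.integral_of_le hpq,
        intervalIntegral.integral_interval_sub_left (hφ.intervalIntegrable _ _)
          (hφ.intervalIntegrable _ _)]
  have hP := intervalIntegral.continuous_primitive (μ := μ) (hφ.intervalIntegrable) 0
  rw [hsub _ _ hcd₀]
  exact (((hP.tendsto _).comp hd).sub ((hP.tendsto _).comp hc)).congr'
    (hcd.mono fun x h => (hsub _ _ h).symm)

section Derivative

variable {f g : ℝ → ℝ} {s : Set ℝ} {x₀ : ℝ}

lemma hasDerivWithinAt_of_subgradient {φ : ℝ → ℝ} (hx₀ : x₀ ∈ s)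
    (hsub : ∀ x ∈ s, ∀ x' ∈ s, φ x * (x' - x) ≤ f x' - f x) (hφ : ContinuousWithinAt φ s x₀) :
    HasDerivWithinAt f (φ x₀) s x₀ := by
  rw [hasDerivWithinAt_iff_isLittleO]
  have ho : (fun x => (φ x - φ x₀) * (x - x₀)) =o[𝓝[s] x₀] fun x => x - x₀ := by
    simpa using ((Asymptotics.isLittleO_one_iff ℝ).2 (tendsto_sub_nhds_zero_iff.2 hφ)).mul_isBigO
      (Asymptotics.isBigO_refl (fun x => x - x₀) _)
  refine (Asymptotics.IsBigO.of_bound 1 ?_).trans_isLittleO ho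
  filter_upwards [self_mem_nhdsWithin] with x hx
  have h₀ := hsub x₀ hx₀ x hx
  have h₁ := hsub x hx x₀ hx₀
  rw [smul_eq_mul, one_mul, Real.norm_eq_abs, Real.norm_eq_abs, abs_of_nonneg (by linarith)]
  exact (by linarith : _ ≤ (φ x - φ x₀) * (x - x₀)).trans (le_abs_self _)

/-- Writing `g y - g y₀ = σ(y) (y - y₀)` with `σ` continuous at `y₀` and `σ(y₀) = g'(y₀)`,
the relation becomes `(x - σ(Y x)) (Y x - Y x₀) = f x - f x₀ - Y x₀ (x - x₀)`. -/
lemma hasDerivWithinAt_of_implicit {Y : ℝ → ℝ} {t : Set ℝ} {T G : ℝ}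
    (hY : Tendsto Y (𝓝[s] x₀) (𝓝[t] (Y x₀)))
    (hroot : ∀ᶠ x in 𝓝[s] x₀, x * Y x - f x - g (Y x) = x₀ * Y x₀ - f x₀ - g (Y x₀))
    (hf : HasDerivWithinAt f T s x₀) (hg : HasDerivWithinAt g G t (Y x₀)) (hG : x₀ - G ≠ 0) :
    HasDerivWithinAt Y ((T - Y x₀) / (x₀ - G)) s x₀ := by
  classical
  set σ := Function.update (slope g (Y x₀)) (Y x₀) G
  have hσ : ContinuousWithinAt σ t (Y x₀) :=
    continuousWithinAt_update_same.2 (hasDerivWithinAt_iff_tendsto_slope.1 hg)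
  have hgσ : ∀ y, g y - g (Y x₀) = σ y * (y - Y x₀) := fun y => by
    rcases eq_or_ne y (Y x₀) with rfl | hy
    · simp
    · simp only [σ, Function.update_of_ne hy]
      rw [mul_comm, ← smul_eq_mul, sub_smul_slope, vsub_eq_sub]
  have hden : Tendsto (fun x => x - σ (Y x)) (𝓝[s \ {x₀}] x₀) (𝓝 (x₀ - G)) := by
    have hσY : Tendsto (fun x => σ (Y x)) (𝓝[s \ {x₀}] x₀) (𝓝 G) := by
      simpa [σ, Function.comp_def] using
        (hσ.tendsto.comp hY).mono_left (nhdsWithin_mono x₀ sdiff_subset)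
    exact (tendsto_nhdsWithin_of_tendsto_nhds tendsto_id).sub hσY
  rw [hasDerivWithinAt_iff_tendsto_slope]
  refine (((hasDerivWithinAt_iff_tendsto_slope.1 hf).sub_const (Y x₀)).div hden hG).congr' ?_
  filter_upwards [nhdsWithin_mono x₀ sdiff_subset hroot, hden.eventually_ne hG,
    self_mem_nhdsWithin] with x hx hne hxs
  have hx0 : x - x₀ ≠ 0 := sub_ne_zero.2 hxs.2
  simp only [Pi.div_apply]
  rw [slope_def_field, slope_def_field, div_sub' hx0, div_div,
    div_eq_div_iff (mul_ne_zero hx0 hne) hx0]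
  linear_combination -(x - x₀) * (hx + hgσ (Y x))

end Derivative

section OneSided

variable {μ : Measure ℝ} [IsFiniteMeasure μ] [NullSingletonClass μ] {f g : ℝ → ℝ}
  {a₀ b₀ a₁ b₁ ε x₀ : ℝ}
  (hf : ContinuousOn f (Icc a₀ b₀)) (hg : ContinuousOn g (Icc a₁ b₁))
  (hgc : ConvexOn ℝ (Icc a₁ b₁) g) (hε : ε ≠ 0)
  (hE : ∀ x ∈ Icc a₀ b₀, ∫ y in Icc a₁ b₁, max (x * y - f x - g y) 0 ∂μ = ε)
include hf hg hgc hε hE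

lemma continuousWithinAt_Tmap (hx₀ : x₀ ∈ Icc a₀ b₀) :
    ContinuousWithinAt (Tmap μ f g a₁ b₁) (Icc a₀ b₀) x₀ := by
  have hI : ∀ x ∈ Icc a₀ b₀, ∫ y in Icc a₁ b₁, max (x * y - f x - g y) 0 ∂μ ≠ 0 :=
    fun x hx => (hE x hx).trans_ne hε
  have hS := fun x hx => measure_secX_ne_zero (hI x hx)
  have hT : ∀ x ∈ Icc a₀ b₀, Tmap μ f g a₁ b₁ x =
      (∫ y in Icc (ymF f g a₁ b₁ x) (yMF f g a₁ b₁ x), y ∂μ) /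
        ∫ y in Icc (ymF f g a₁ b₁ x) (yMF f g a₁ b₁ x), (1 : ℝ) ∂μ := fun x hx => by
    rw [Tmap, secX_eq_Icc hg hgc (nonempty_of_measure_ne_zero (hS x hx)), setIntegral_const,
      smul_eq_mul, mul_one, measureReal_def]
  have hle : ∀ᶠ x in 𝓝[Icc a₀ b₀] x₀, ymF f g a₁ b₁ x ≤ yMF f g a₁ b₁ x :=
    eventually_mem_nhdsWithin.mono fun x hx => (ymF_lt_yMF (hS x hx)).le
  have hle₀ := (ymF_lt_yMF (hS x₀ hx₀)).le
  have hym := continuousWithinAt_ymF hf hg hgc hI hx₀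
  have hyM := continuousWithinAt_yMF hf hg hgc hI hx₀
  have hden : ∫ y in Icc (ymF f g a₁ b₁ x₀) (yMF f g a₁ b₁ x₀), (1 : ℝ) ∂μ ≠ 0 := by
    rw [setIntegral_const, smul_eq_mul, mul_one, measureReal_def,
      ← secX_eq_Icc hg hgc (nonempty_of_measure_ne_zero (hS x₀ hx₀))]
    exact (ENNReal.toReal_pos (hS x₀ hx₀) (measure_ne_top μ _)).ne'
  rw [ContinuousWithinAt, hT x₀ hx₀]
  exact ((tendsto_setIntegral_Icc continuous_id' hym hyM hle hle₀).div
    (tendsto_setIntegral_Icc continuous_const hym hyM hle hle₀) hden).congr'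
    (eventually_mem_nhdsWithin.mono fun x hx => (hT x hx).symm)

lemma hasDerivWithinAt_potential (hx₀ : x₀ ∈ Icc a₀ b₀) :
    HasDerivWithinAt f (Tmap μ f g a₁ b₁ x₀) (Icc a₀ b₀) x₀ :=
  hasDerivWithinAt_of_subgradient hx₀
    (fun x hx x' hx' => Tmap_mul_sub_le hg (measure_secX_ne_zero ((hE x hx).trans_ne hε))
      ((hE x hx).trans (hE x' hx').symm))
    (continuousWithinAt_Tmap hf hg hgc hε hE hx₀)

end OneSided

lemma secY_eq_secX (f g : ℝ → ℝ) (a₀ b₀ y : ℝ) : secY f g a₀ b₀ y = secX g f a₀ b₀ y := by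
  ext x
  exact and_congr_right fun _ => by rw [mul_comm x y, sub_right_comm]

lemma Gmap_eq_Tmap (μ₀ : Measure ℝ) (f g : ℝ → ℝ) (a₀ b₀ : ℝ) :
    Gmap μ₀ f g a₀ b₀ = Tmap μ₀ g f a₀ b₀ := by
  ext y
  rw [Gmap, Tmap, secY_eq_secX]

namespace IsPotentialPair

variable {μ₀ μ₁ : Measure ℝ} {f g : ℝ → ℝ} {a₀ b₀ a₁ b₁ ε x y : ℝ}

lemma symm (hfg : IsPotentialPair μ₀ μ₁ a₀ b₀ a₁ b₁ ε f g) :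
    IsPotentialPair μ₁ μ₀ a₁ b₁ a₀ b₀ ε g f := by
  obtain ⟨hf, hg, hE₀, hE₁⟩ := hfg
  refine ⟨hg, hf, fun y hy => ?_, fun x hx => ?_⟩
  · simpa only [mul_comm y, sub_right_comm _ (f _)] using hE₁ y hy
  · simpa only [mul_comm x, sub_right_comm _ (f _)] using hE₀ x hx

variable (hfg : IsPotentialPair μ₀ μ₁ a₀ b₀ a₁ b₁ ε f g) (hε : ε ≠ 0)
include hfg

lemma continuousOn_left : ContinuousOn f (Icc a₀ b₀) :=
  hfg.1.choose_spec.continuousOn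

lemma continuousOn_right : ContinuousOn g (Icc a₁ b₁) :=
  hfg.symm.continuousOn_left

include hε

lemma integral_ne_zero (hx : x ∈ Icc a₀ b₀) :
    ∫ y in Icc a₁ b₁, max (x * y - f x - g y) 0 ∂μ₁ ≠ 0 :=
  (hfg.2.2.1 x hx).trans_ne hε

lemma Tmap_mul_sub_le [IsFiniteMeasure μ₁] {x' : ℝ} (hx : x ∈ Icc a₀ b₀)
    (hx' : x' ∈ Icc a₀ b₀) : Tmap μ₁ f g a₁ b₁ x * (x' - x) ≤ f x' - f x :=
  _root_.Tmap_mul_sub_le hfg.continuousOn_right (measure_secX_ne_zero (hfg.integral_ne_zero hε hx))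
    ((hfg.2.2.1 x hx).trans (hfg.2.2.1 x' hx').symm)

lemma convexOn_left [IsFiniteMeasure μ₁] : ConvexOn ℝ (Icc a₀ b₀) f :=
  convexOn_of_subgradient (convex_Icc a₀ b₀) fun _ hx _ hx' => hfg.Tmap_mul_sub_le hε hx hx'

variable [IsFiniteMeasure μ₀] [IsFiniteMeasure μ₁]

lemma hasDerivWithinAt_left [NullSingletonClass μ₁] (hx : x ∈ Icc a₀ b₀) :
    HasDerivWithinAt f (Tmap μ₁ f g a₁ b₁ x) (Icc a₀ b₀) x :=
  hasDerivWithinAt_potential hfg.continuousOn_left hfg.continuousOn_right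
    (hfg.symm.convexOn_left hε) hε hfg.2.2.1 hx

lemma hasDerivWithinAt_right [NullSingletonClass μ₀] (hy : y ∈ Icc a₁ b₁) :
    HasDerivWithinAt g (Gmap μ₀ f g a₀ b₀ y) (Icc a₁ b₁) y := by
  rw [Gmap_eq_Tmap]
  exact hfg.symm.hasDerivWithinAt_left hε hy

lemma Gmap_lt_of_lt_Tmap [NullSingletonClass μ₀] (hx : x ∈ Icc a₀ b₀) (hy : y ∈ Icc a₁ b₁)
    (hξ : x * y - f x - g y ≤ 0) (hyT : y < Tmap μ₁ f g a₁ b₁ x) :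
    Gmap μ₀ f g a₀ b₀ y < x := by
  have hS := measure_secX_ne_zero (hfg.symm.integral_ne_zero hε hy)
  rw [← secY_eq_secX] at hS
  refine setIntegral_id_div_lt (secY_eq_secX f g a₀ b₀ y ▸ isCompact_secX hfg.continuousOn_left)
    hS fun x' hx' => le_of_not_gt fun hlt => ?_
  have := mul_lt_mul_of_pos_left hyT (sub_pos.2 hlt)
  linarith [hfg.Tmap_mul_sub_le hε hx hx'.1, hx'.2]

lemma lt_Gmap_of_Tmap_lt [NullSingletonClass μ₀] (hx : x ∈ Icc a₀ b₀) (hy : y ∈ Icc a₁ b₁)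
    (hξ : x * y - f x - g y ≤ 0) (hTy : Tmap μ₁ f g a₁ b₁ x < y) :
    x < Gmap μ₀ f g a₀ b₀ y := by
  have hS := measure_secX_ne_zero (hfg.symm.integral_ne_zero hε hy)
  rw [← secY_eq_secX] at hS
  refine lt_setIntegral_id_div (secY_eq_secX f g a₀ b₀ y ▸ isCompact_secX hfg.continuousOn_left)
    hS fun x' hx' => le_of_not_gt fun hlt => ?_
  have := mul_lt_mul_of_pos_left hTy (sub_pos.2 hlt)
  linarith [hfg.Tmap_mul_sub_le hε hx hx'.1, hx'.2]

lemma hasDerivWithinAt_of_xi_eq_zero [NullSingletonClass μ₀] [NullSingletonClass μ₁]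
    {Y : ℝ → ℝ} (hx : x ∈ Icc a₀ b₀)
    (hY : ∀ x ∈ Icc a₀ b₀, Y x ∈ Icc a₁ b₁) (hYc : ContinuousWithinAt Y (Icc a₀ b₀) x)
    (hroot : ∀ᶠ x' in 𝓝[Icc a₀ b₀] x, x' * Y x' - f x' - g (Y x') = 0)
    (hG : x - Gmap μ₀ f g a₀ b₀ (Y x) ≠ 0) :
    HasDerivWithinAt Y ((Tmap μ₁ f g a₁ b₁ x - Y x) / (x - Gmap μ₀ f g a₀ b₀ (Y x)))
      (Icc a₀ b₀) x :=
  hasDerivWithinAt_of_implicit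
    (tendsto_nhdsWithin_iff.2 ⟨hYc, eventually_mem_nhdsWithin.mono hY⟩)
    (hroot.mono fun _ h => h.trans (hroot.self_of_nhdsWithin hx).symm)
    (hfg.hasDerivWithinAt_left hε hx) (hfg.hasDerivWithinAt_right hε (hY x hx)) hG

lemma ymF_spec [NullSingletonClass μ₀] [NullSingletonClass μ₁] (hx : x ∈ Icc a₀ b₀) :
    (x * a₁ - f x - g a₁ < 0 ↔ a₁ < ymF f g a₁ b₁ x) ∧
      (x * a₁ - f x - g a₁ < 0 →
        ymF f g a₁ b₁ x < Tmap μ₁ f g a₁ b₁ x ∧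
        Gmap μ₀ f g a₀ b₀ (ymF f g a₁ b₁ x) < x ∧
        0 < (Tmap μ₁ f g a₁ b₁ x - ymF f g a₁ b₁ x) / (x - Gmap μ₀ f g a₀ b₀ (ymF f g a₁ b₁ x)) ∧
        HasDerivWithinAt (ymF f g a₁ b₁)
          ((Tmap μ₁ f g a₁ b₁ x - ymF f g a₁ b₁ x) / (x - Gmap μ₀ f g a₀ b₀ (ymF f g a₁ b₁ x)))
          (Icc a₀ b₀) x) := by
  have hg := hfg.continuousOn_right
  have hne : ∀ x ∈ Icc a₀ b₀, (secX f g a₁ b₁ x).Nonempty := fun x hx =>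
    nonempty_of_measure_ne_zero (measure_secX_ne_zero (hfg.integral_ne_zero hε hx))
  refine ⟨xi_neg_iff_lt_ymF hg (hne x hx), fun h => ?_⟩
  have ha := (xi_neg_iff_lt_ymF hg (hne x hx)).1 h
  have hyT := (Tmap_mem_Ioo hg (measure_secX_ne_zero (hfg.integral_ne_zero hε hx))).1
  have hGx := hfg.Gmap_lt_of_lt_Tmap hε hx (ymF_mem hg (hne x hx)).1
    (xi_ymF_eq_zero hg (hne x hx) ha).le hyT
  have hYc := continuousWithinAt_ymF hfg.continuousOn_left hg (hfg.symm.convexOn_left hε)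
    (fun x hx => hfg.integral_ne_zero hε hx) hx
  refine ⟨hyT, hGx, div_pos (sub_pos.2 hyT) (sub_pos.2 hGx),
    hfg.hasDerivWithinAt_of_xi_eq_zero hε hx (fun x hx => (ymF_mem hg (hne x hx)).1) hYc ?_
      (sub_pos.2 hGx).ne'⟩
  filter_upwards [hYc.eventually (lt_mem_nhds ha), self_mem_nhdsWithin] with x' h' hx'
    using xi_ymF_eq_zero hg (hne x' hx') h'

lemma yMF_spec [NullSingletonClass μ₀] [NullSingletonClass μ₁] (hx : x ∈ Icc a₀ b₀) :
    (x * b₁ - f x - g b₁ < 0 ↔ yMF f g a₁ b₁ x < b₁) ∧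
      (x * b₁ - f x - g b₁ < 0 →
        0 < (Tmap μ₁ f g a₁ b₁ x - yMF f g a₁ b₁ x) / (x - Gmap μ₀ f g a₀ b₀ (yMF f g a₁ b₁ x)) ∧
        HasDerivWithinAt (yMF f g a₁ b₁)
          ((Tmap μ₁ f g a₁ b₁ x - yMF f g a₁ b₁ x) / (x - Gmap μ₀ f g a₀ b₀ (yMF f g a₁ b₁ x)))
          (Icc a₀ b₀) x) := by
  have hg := hfg.continuousOn_right
  have hne : ∀ x ∈ Icc a₀ b₀, (secX f g a₁ b₁ x).Nonempty := fun x hx =>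
    nonempty_of_measure_ne_zero (measure_secX_ne_zero (hfg.integral_ne_zero hε hx))
  refine ⟨xi_neg_iff_yMF_lt hg (hne x hx), fun h => ?_⟩
  have hb := (xi_neg_iff_yMF_lt hg (hne x hx)).1 h
  have hTy := (Tmap_mem_Ioo hg (measure_secX_ne_zero (hfg.integral_ne_zero hε hx))).2
  have hxG := hfg.lt_Gmap_of_Tmap_lt hε hx (yMF_mem hg (hne x hx)).1
    (xi_yMF_eq_zero hg (hne x hx) hb).le hTy
  have hYc := continuousWithinAt_yMF hfg.continuousOn_left hg (hfg.symm.convexOn_left hε)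
    (fun x hx => hfg.integral_ne_zero hε hx) hx
  refine ⟨div_pos_of_neg_of_neg (sub_neg.2 hTy) (sub_neg.2 hxG),
    hfg.hasDerivWithinAt_of_xi_eq_zero hε hx (fun x hx => (yMF_mem hg (hne x hx)).1) hYc ?_
      (sub_neg.2 hxG).ne⟩
  filter_upwards [hYc.eventually (gt_mem_nhds hb), self_mem_nhdsWithin] with x' h' hx'
    using xi_yMF_eq_zero hg (hne x' hx') h'

end IsPotentialPair

theorem stmt3_general
    (a₀ b₀ a₁ b₁ lam Lam : ℝ) (μ₀ μ₁ : Measure ℝ) (u₀ u₁ : ℝ → ℝ)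
    (hμ₀ : IsGoodMarginal μ₀ u₀ a₀ b₀ lam Lam)
    (hμ₁ : IsGoodMarginal μ₁ u₁ a₁ b₁ lam Lam)
    (ε : ℝ) (hε : 0 < ε) (f g : ℝ → ℝ)
    (hfg : IsPotentialPair μ₀ μ₁ a₀ b₀ a₁ b₁ ε f g) :
    ∀ x ∈ Icc a₀ b₀,
      ((x * a₁ - f x - g a₁ < 0 ↔ a₁ < ymF f g a₁ b₁ x) ∧
        (x * a₁ - f x - g a₁ < 0 →
          ymF f g a₁ b₁ x < Tmap μ₁ f g a₁ b₁ x ∧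
          Gmap μ₀ f g a₀ b₀ (ymF f g a₁ b₁ x) < x ∧
          0 < (Tmap μ₁ f g a₁ b₁ x - ymF f g a₁ b₁ x) /
              (x - Gmap μ₀ f g a₀ b₀ (ymF f g a₁ b₁ x)) ∧
          HasDerivWithinAt (ymF f g a₁ b₁)
            ((Tmap μ₁ f g a₁ b₁ x - ymF f g a₁ b₁ x) /
              (x - Gmap μ₀ f g a₀ b₀ (ymF f g a₁ b₁ x))) (Icc a₀ b₀) x)) ∧
      ((x * b₁ - f x - g b₁ < 0 ↔ yMF f g a₁ b₁ x < b₁) ∧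
        (x * b₁ - f x - g b₁ < 0 →
          0 < (Tmap μ₁ f g a₁ b₁ x - yMF f g a₁ b₁ x) /
              (x - Gmap μ₀ f g a₀ b₀ (yMF f g a₁ b₁ x)) ∧
          HasDerivWithinAt (yMF f g a₁ b₁)
            ((Tmap μ₁ f g a₁ b₁ x - yMF f g a₁ b₁ x) /
              (x - Gmap μ₀ f g a₀ b₀ (yMF f g a₁ b₁ x))) (Icc a₀ b₀) x)) := by
  have := hμ₀.1
  have := hμ₁.1
  have := hμ₀.nullSingletonClass
  have := hμ₁.nullSingletonClass
  exact fun x hx => ⟨hfg.ymF_spec hε.ne' hx, hfg.yMF_spec hε.ne' hx⟩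

theorem stmt3
    (a₀ b₀ a₁ b₁ lam Lam : ℝ) (μ₀ μ₁ : Measure ℝ) (u₀ u₁ : ℝ → ℝ)
    (hab₀ : a₀ < b₀) (hab₁ : a₁ < b₁) (hlam : 0 < lam)
    (hμ₀ : IsGoodMarginal μ₀ u₀ a₀ b₀ lam Lam)
    (hμ₁ : IsGoodMarginal μ₁ u₁ a₁ b₁ lam Lam)
    (ε : ℝ) (hε : 0 < ε) (f g : ℝ → ℝ)
    (hfg : IsPotentialPair μ₀ μ₁ a₀ b₀ a₁ b₁ ε f g)
    (hsmall : ∀ x ∈ Icc a₀ b₀, (volume (secX f g a₁ b₁ x)).toReal ≤ (b₁ - a₁) / 3) :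
    ∀ x ∈ Icc a₀ b₀,
      ((x * a₁ - f x - g a₁ < 0 ↔ a₁ < ymF f g a₁ b₁ x) ∧
        (x * a₁ - f x - g a₁ < 0 →
          ymF f g a₁ b₁ x < Tmap μ₁ f g a₁ b₁ x ∧
          Gmap μ₀ f g a₀ b₀ (ymF f g a₁ b₁ x) < x ∧
          0 < (Tmap μ₁ f g a₁ b₁ x - ymF f g a₁ b₁ x) /
              (x - Gmap μ₀ f g a₀ b₀ (ymF f g a₁ b₁ x)) ∧
          HasDerivWithinAt (ymF f g a₁ b₁)
            ((Tmap μ₁ f g a₁ b₁ x - ymF f g a₁ b₁ x) /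
              (x - Gmap μ₀ f g a₀ b₀ (ymF f g a₁ b₁ x))) (Icc a₀ b₀) x)) ∧
      ((x * b₁ - f x - g b₁ < 0 ↔ yMF f g a₁ b₁ x < b₁) ∧
        (x * b₁ - f x - g b₁ < 0 →
          0 < (Tmap μ₁ f g a₁ b₁ x - yMF f g a₁ b₁ x) /
              (x - Gmap μ₀ f g a₀ b₀ (yMF f g a₁ b₁ x)) ∧
          HasDerivWithinAt (yMF f g a₁ b₁)
            ((Tmap μ₁ f g a₁ b₁ x - yMF f g a₁ b₁ x) /
              (x - Gmap μ₀ f g a₀ b₀ (yMF f g a₁ b₁ x))) (Icc a₀ b₀) x)) :=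
  stmt3_general a₀ b₀ a₁ b₁ lam Lam μ₀ μ₁ u₀ u₁ hμ₀ hμ₁ ε hε f g hfg
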